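/- arXiv:2303.08521 — 2 statements merged into one kernel-verified Lean document; each statement's English description precedes it below -/
import Mathlib

section
/- In the Bayesian investment model with discrete prior, assume additionally that ‖ϑ_1‖ < ‖ϑ_2‖ < … < ‖ϑ_m‖ and that 0 < γ < 1 (corresponding to a risk-aversion parameter α = 1 − 1/γ < 0). Then for every t ≥ 0 and every y ∈ ℝ^d: lim_{T → ∞} κ(t, T, y) = γ (σ^⊤)^{−1} ϑ_1, i.e. the optimal investment fraction converges to the Merton fraction of the drift scenario with the smallest Euclidean norm. -/
open MeasureTheory Real Filter Topology

/-- Density of the `N(0, T·I_d)` distribution on `ℝ^d`. -/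
noncomputable def gaussDensity (d : ℕ) (T : ℝ) (z : Fin d → ℝ) : ℝ :=
  (2 * π * T) ^ (-(d : ℝ) / 2) * Real.exp (-(∑ i, z i ^ 2) / (2 * T))

/-- Likelihood factor `L_t(ϑ, z) = exp(⟨z, ϑ⟩ - ½‖ϑ‖²t)`. -/
noncomputable def likelihood (d : ℕ) (t : ℝ) (ϑ z : Fin d → ℝ) : ℝ :=
  Real.exp ((∑ i, z i * ϑ i) - (∑ i, ϑ i ^ 2) * t / 2)

/-- `F(t, z) = ∑_k p_k L_t(ϑ_k, z)` for the discrete prior `(p_k, ϑ_k)`. -/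
noncomputable def priorF (d m : ℕ) (p : Fin m → ℝ) (ϑ : Fin m → Fin d → ℝ)
    (t : ℝ) (z : Fin d → ℝ) : ℝ :=
  ∑ k, p k * likelihood d t (ϑ k) z

/-- Optimal Bayesian investment fraction
`κ(t, T, y) = γ (σᵀ)⁻¹ [∫ (∑_k p_k ϑ_k L_T(ϑ_k, y+z)) F(T, y+z)^{γ-1} φ_{T-t}(z) dz] /
[∫ F(T, y+z)^γ φ_{T-t}(z) dz]`. -/
noncomputable def kappa (d m : ℕ) (σ : Matrix (Fin d) (Fin d) ℝ)
    (p : Fin m → ℝ) (ϑ : Fin m → Fin d → ℝ) (γ t T : ℝ) (y : Fin d → ℝ) :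
    Fin d → ℝ :=
  γ • ((σ.transpose)⁻¹).mulVec
    ((∫ z : Fin d → ℝ, priorF d m p ϑ T (y + z) ^ γ * gaussDensity d (T - t) z)⁻¹ •
      ∫ z : Fin d → ℝ,
        (priorF d m p ϑ T (y + z) ^ (γ - 1) * gaussDensity d (T - t) z) •
          ∑ k, (p k * likelihood d T (ϑ k) (y + z)) • ϑ k)


lemma gauss1d (s v : ℝ) (hs : 0 < s) :
    ∫ x : ℝ, Real.exp (x * v) * ((2*π*s) ^ (-(1:ℝ)/2) * Real.exp (-(x^2)/(2*s)))
      = Real.exp (s * v^2 / 2) := by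
  have h2s : (0:ℝ) < 2*s := by linarith
  have h2πs : (0:ℝ) < 2*π*s := by positivity
  have key : ∀ x : ℝ, Real.exp (x * v) * ((2*π*s) ^ (-(1:ℝ)/2) * Real.exp (-(x^2)/(2*s)))
      = ((2*π*s) ^ (-(1:ℝ)/2) * Real.exp (s*v^2/2)) * Real.exp (-(2*s)⁻¹ * (x - s*v)^2) := by
    intro x
    rw [mul_assoc, mul_comm (Real.exp (x*v)), mul_assoc, mul_assoc, ← Real.exp_add, ← Real.exp_add]
    congr 1
    field_simp
    ring
  simp_rw [key]
  rw [MeasureTheory.integral_const_mul]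
  have h3 : ∫ x : ℝ, Real.exp (-(2*s)⁻¹ * (x - s*v)^2) = Real.sqrt (π / (2*s)⁻¹) := by
    rw [← integral_gaussian ((2*s)⁻¹)]
    exact integral_sub_right_eq_self (fun x => Real.exp (-(2*s)⁻¹ * x^2)) (s*v)
  rw [h3]
  have h4 : π / (2*s)⁻¹ = 2*π*s := by field_simp
  rw [h4, Real.sqrt_eq_rpow, mul_right_comm, ← Real.rpow_add h2πs]
  norm_num

lemma integrable1d (s v : ℝ) (hs : 0 < s) :
    Integrable (fun x : ℝ => Real.exp (x * v) * ((2*π*s) ^ (-(1:ℝ)/2) * Real.exp (-(x^2)/(2*s)))) := by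
  have h2πs : (0:ℝ) < 2*π*s := by positivity
  have key : ∀ x : ℝ, Real.exp (x * v) * ((2*π*s) ^ (-(1:ℝ)/2) * Real.exp (-(x^2)/(2*s)))
      = ((2*π*s) ^ (-(1:ℝ)/2) * Real.exp (s*v^2/2)) * Real.exp (-(2*s)⁻¹ * (x - s*v)^2) := by
    intro x
    rw [mul_assoc, mul_comm (Real.exp (x*v)), mul_assoc, mul_assoc, ← Real.exp_add, ← Real.exp_add]
    congr 1
    field_simp
    ring
  simp_rw [key]
  exact ((integrable_exp_neg_mul_sq (by positivity)).comp_sub_right (s*v)).const_mul _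

lemma prod_form (d : ℕ) (s : ℝ) (hs : 0 < s) (v z : Fin d → ℝ) :
    Real.exp (∑ i, z i * v i) * gaussDensity d s z
      = ∏ i, (Real.exp (z i * v i) * ((2*π*s) ^ (-(1:ℝ)/2) * Real.exp (-(z i ^ 2)/(2*s)))) := by
  have h2πs : (0:ℝ) < 2*π*s := by positivity
  have h1 : ((2*π*s) ^ (-(1:ℝ)/2)) ^ (d:ℕ) = (2*π*s) ^ (-(d:ℝ)/2) := by
    rw [← Real.rpow_natCast ((2*π*s) ^ (-(1:ℝ)/2)) d, ← Real.rpow_mul h2πs.le]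
    norm_num
    ring_nf
  rw [Finset.prod_mul_distrib, Finset.prod_mul_distrib, Finset.prod_const,
    ← Real.exp_sum, Finset.card_univ, Fintype.card_fin, h1, ← Real.exp_sum, gaussDensity]
  have h2 : ∑ i, -(z i ^ 2) / (2*s) = -(∑ i, z i ^ 2) / (2*s) := by
    rw [← Finset.sum_div, Finset.sum_neg_distrib]
  rw [h2]

lemma gaussd (d : ℕ) (s : ℝ) (hs : 0 < s) (v : Fin d → ℝ) :
    ∫ z : Fin d → ℝ, Real.exp (∑ i, z i * v i) * gaussDensity d s z
      = Real.exp (s * (∑ i, v i ^ 2) / 2) := by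
  simp_rw [prod_form d s hs v]
  rw [MeasureTheory.integral_fintype_prod_volume_eq_prod (ι := Fin d)
    (fun i (x:ℝ) => Real.exp (x * v i) * ((2*π*s) ^ (-(1:ℝ)/2) * Real.exp (-(x^2)/(2*s))))]
  simp_rw [gauss1d s _ hs, ← Real.exp_sum]
  congr 1
  rw [← Finset.sum_div, Finset.mul_sum]

lemma integrabled (d : ℕ) (s : ℝ) (hs : 0 < s) (v : Fin d → ℝ) :
    Integrable (fun z : Fin d → ℝ => Real.exp (∑ i, z i * v i) * gaussDensity d s z) := by
  have := Integrable.fintype_prod (E := ℝ)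
    (f := fun (i : Fin d) (x:ℝ) => Real.exp (x * v i) * ((2*π*s) ^ (-(1:ℝ)/2) * Real.exp (-(x^2)/(2*s))))
    (fun i => integrable1d s (v i) hs)
  apply this.congr
  filter_upwards with z
  rw [prod_form d s hs v]

lemma like_ptwise (d : ℕ) (T s c : ℝ) (ϑ y z : Fin d → ℝ) :
    likelihood d T ϑ (y + z) ^ c * gaussDensity d s z
      = Real.exp (c * (∑ i, y i * ϑ i) - c * (∑ i, ϑ i ^ 2) * T / 2) *
        (Real.exp (∑ i, z i * (c * ϑ i)) * gaussDensity d s z) := by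
  have hA : ∑ i, (y + z) i * ϑ i = (∑ i, y i * ϑ i) + ∑ i, z i * ϑ i := by
    rw [← Finset.sum_add_distrib]
    exact Finset.sum_congr rfl fun i _ => by simp [Pi.add_apply]; ring
  have hB : ∑ i, z i * (c * ϑ i) = c * ∑ i, z i * ϑ i := by
    rw [Finset.mul_sum]
    exact Finset.sum_congr rfl fun i _ => by ring
  rw [likelihood, ← Real.exp_mul, ← mul_assoc, ← Real.exp_add, hA, hB]
  congr 2
  ring

lemma like_int (d : ℕ) (T s c : ℝ) (hs : 0 < s) (ϑ y : Fin d → ℝ) :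
    ∫ z : Fin d → ℝ, likelihood d T ϑ (y + z) ^ c * gaussDensity d s z
      = Real.exp (c * (∑ i, y i * ϑ i) - c * (∑ i, ϑ i ^ 2) * T / 2
          + s * c ^ 2 * (∑ i, ϑ i ^ 2) / 2) := by
  simp_rw [like_ptwise d T s c ϑ y]
  rw [MeasureTheory.integral_const_mul, gaussd d s hs, ← Real.exp_add]
  congr 1
  have : ∑ i, (c * ϑ i) ^ 2 = c ^ 2 * ∑ i, ϑ i ^ 2 := by
    rw [Finset.mul_sum]; exact Finset.sum_congr rfl fun i _ => by ring
  rw [this]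
  ring

lemma like_integrable (d : ℕ) (T s c : ℝ) (hs : 0 < s) (ϑ y : Fin d → ℝ) :
    Integrable (fun z : Fin d → ℝ =>
      likelihood d T ϑ (y + z) ^ c * gaussDensity d s z) := by
  simp_rw [like_ptwise d T s c ϑ y]
  exact (integrabled d s hs (fun i => c * ϑ i)).const_mul _

lemma rpow_two_add_le (γ x y : ℝ) (hx : 0 ≤ x) (hy : 0 ≤ y) (h0 : 0 ≤ γ) (h1 : γ ≤ 1) :
    (x + y) ^ γ ≤ x ^ γ + y ^ γ := by
  have h := NNReal.rpow_add_le_add_rpow x.toNNReal y.toNNReal h0 h1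
  have := NNReal.coe_le_coe.2 h
  push_cast at this
  rwa [Real.coe_toNNReal x hx, Real.coe_toNNReal y hy] at this

lemma rpow_sum_le {ι : Type*} (γ : ℝ) (h0 : 0 < γ) (h1 : γ ≤ 1) (s : Finset ι) (f : ι → ℝ)
    (hf : ∀ i ∈ s, 0 ≤ f i) : (∑ i ∈ s, f i) ^ γ ≤ ∑ i ∈ s, f i ^ γ := by
  induction s using Finset.cons_induction with
  | empty => simp [Real.zero_rpow (ne_of_gt h0)]
  | cons a s ha ih =>
    rw [Finset.sum_cons, Finset.sum_cons]
    have hfa := hf a (Finset.mem_cons_self a s)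
    have hfs : ∀ i ∈ s, 0 ≤ f i := fun i hi => hf i (Finset.mem_cons_of_mem hi)
    have hsum : 0 ≤ ∑ i ∈ s, f i := Finset.sum_nonneg hfs
    calc (f a + ∑ i ∈ s, f i) ^ γ ≤ f a ^ γ + (∑ i ∈ s, f i) ^ γ :=
          rpow_two_add_le γ _ _ hfa hsum h0.le h1
      _ ≤ f a ^ γ + ∑ i ∈ s, f i ^ γ := by linarith [ih hfs]

lemma key_ineq (γ a x : ℝ) (hγ0 : 0 < γ) (hγ1 : γ < 1) (ha : 0 < a) (hx : 0 ≤ x) :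
    a ^ (γ - 1) - a⁻¹ * x ^ γ ≤ (a + x) ^ (γ - 1) := by
  rcases le_or_gt a x with hax | hax
  · have h1 : a ^ (γ - 1) ≤ a⁻¹ * x ^ γ := by
      have e : a ^ (γ - 1) = a⁻¹ * a ^ γ := by
        rw [Real.rpow_sub ha, Real.rpow_one, div_eq_inv_mul]
      rw [e]
      exact mul_le_mul_of_nonneg_left (Real.rpow_le_rpow ha.le hax hγ0.le)
        (inv_nonneg.2 ha.le)
    have h2 : (0:ℝ) ≤ (a + x) ^ (γ - 1) := Real.rpow_nonneg (by linarith) _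
    linarith
  · have s1 : a ^ (γ - 2) * x ≤ a⁻¹ * x ^ γ := by
      rcases eq_or_lt_of_le hx with h0 | hx0
      · rw [← h0, mul_zero, Real.zero_rpow (ne_of_gt hγ0), mul_zero]
      · have hA : a ^ (γ - 1) ≤ x ^ (γ - 1) :=
          Real.rpow_le_rpow_of_nonpos hx0 hax.le (by linarith)
        have hB : x ^ (γ - 1) * x = x ^ γ := by
          rw [← Real.rpow_add_one (ne_of_gt hx0)]; ring_nf
        calc a ^ (γ - 2) * x = a⁻¹ * (a ^ (γ - 1) * x) := by
              rw [show γ - 2 = γ - 1 - 1 by ring, Real.rpow_sub ha, Real.rpow_one,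
                div_eq_inv_mul]
              ring
          _ ≤ a⁻¹ * (x ^ (γ - 1) * x) := by
              apply mul_le_mul_of_nonneg_left _ (inv_nonneg.2 ha.le)
              exact mul_le_mul_of_nonneg_right hA hx
          _ = a⁻¹ * x ^ γ := by rw [hB]
    have s2 : a ^ (γ - 1) - a ^ (γ - 2) * x ≤ (a + x) ^ (γ - 1) := by
      have hax2 : 0 < a + x := by linarith
      have e2 : (a + x) ^ (γ - 1) = (a + x) ^ γ / (a + x) := by
        rw [Real.rpow_sub hax2, Real.rpow_one]
      have h3 : a ^ γ ≤ (a + x) ^ γ := Real.rpow_le_rpow ha.le (by linarith) hγ0.le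
      have e3 : a ^ (γ - 1) * a = a ^ γ := by
        rw [← Real.rpow_add_one (ne_of_gt ha)]; ring_nf
      have e4 : a ^ (γ - 2) * a = a ^ (γ - 1) := by
        rw [show γ - 2 = γ - 1 - 1 by ring, ← Real.rpow_add_one (ne_of_gt ha)]; ring_nf
      have h4 : (a ^ (γ - 1) - a ^ (γ - 2) * x) * (a + x) ≤ a ^ γ := by
        have hpos : 0 ≤ a ^ (γ - 2) * x ^ 2 := by positivity
        nlinarith [e3, e4]
      calc a ^ (γ - 1) - a ^ (γ - 2) * x ≤ a ^ γ / (a + x) := by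
            rw [le_div_iff₀ hax2]; exact h4
        _ ≤ (a + x) ^ γ / (a + x) := by
            gcongr  -- check name
        _ = (a + x) ^ (γ - 1) := e2.symm
    linarith

section Aux

variable (d m : ℕ) (p : Fin m → ℝ) (ϑ : Fin m → Fin d → ℝ) (γ t : ℝ) (y : Fin d → ℝ)

/-- Denominator integral. -/
noncomputable def Dfun (T : ℝ) : ℝ :=
  ∫ z : Fin d → ℝ, priorF d m p ϑ T (y + z) ^ γ * gaussDensity d (T - t) z

/-- Numerator coefficient integrals. -/
noncomputable def Ifun (k : Fin m) (T : ℝ) : ℝ :=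
  ∫ z : Fin d → ℝ, priorF d m p ϑ T (y + z) ^ (γ - 1) * gaussDensity d (T - t) z *
    (p k * likelihood d T (ϑ k) (y + z))

/-- Closed form of `∫ L_k^γ φ`. -/
noncomputable def Bfun (k : Fin m) (T : ℝ) : ℝ :=
  Real.exp (γ * (∑ i, y i * ϑ k i) - γ * (∑ i, ϑ k i ^ 2) * T / 2
    + (T - t) * γ ^ 2 * (∑ i, ϑ k i ^ 2) / 2)

variable {d m p ϑ γ t y}

lemma Bfun_pos (k : Fin m) (T : ℝ) : 0 < Bfun d m ϑ γ t y k T := Real.exp_pos _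

lemma Bfun_eq (k : Fin m) (T : ℝ) (hT : t < T) :
    ∫ z : Fin d → ℝ, likelihood d T (ϑ k) (y + z) ^ γ * gaussDensity d (T - t) z
      = Bfun d m ϑ γ t y k T := by
  rw [like_int d T (T - t) γ (by linarith) (ϑ k) y, Bfun]

lemma gauss_nonneg {s : ℝ} (hs : 0 < s) (z : Fin d → ℝ) : 0 ≤ gaussDensity d s z := by
  have h : (0:ℝ) < 2 * π * s := by positivity
  exact mul_nonneg (Real.rpow_nonneg h.le _) (Real.exp_pos _).le

lemma likelihood_pos (T : ℝ) (v z : Fin d → ℝ) : 0 < likelihood d T v z := Real.exp_pos _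

lemma priorF_pos (hm : 0 < m) (hp : ∀ k, 0 < p k) (T : ℝ) (z : Fin d → ℝ) :
    0 < priorF d m p ϑ T z := by
  have : Nonempty (Fin m) := ⟨⟨0, hm⟩⟩
  exact Finset.sum_pos (fun k _ => mul_pos (hp k) (likelihood_pos T _ z)) Finset.univ_nonempty

lemma term_le_priorF (hp : ∀ k, 0 < p k) (k : Fin m) (T : ℝ) (z : Fin d → ℝ) :
    p k * likelihood d T (ϑ k) z ≤ priorF d m p ϑ T z :=
  Finset.single_le_sum (f := fun k => p k * likelihood d T (ϑ k) z)
    (fun j _ => (mul_pos (hp j) (likelihood_pos T _ z)).le) (Finset.mem_univ k)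

lemma priorF_continuous (T : ℝ) : Continuous (fun z : Fin d → ℝ => priorF d m p ϑ T (y + z)) := by
  simp only [priorF, likelihood, Pi.add_apply]
  fun_prop

lemma likelihood_continuous (T : ℝ) (v : Fin d → ℝ) :
    Continuous (fun z : Fin d → ℝ => likelihood d T v (y + z)) := by
  unfold likelihood
  fun_prop

lemma gauss_continuous (s : ℝ) : Continuous (gaussDensity d s) := by
  unfold gaussDensity
  fun_prop

lemma Dintegrand_meas (hm : 0 < m) (hp : ∀ k, 0 < p k) (T c : ℝ) :
    Continuous (fun z : Fin d → ℝ =>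
      priorF d m p ϑ T (y + z) ^ c * gaussDensity d (T - t) z) := by
  apply Continuous.mul _ (gauss_continuous (T - t))
  apply (priorF_continuous (p := p) T).rpow_const
  intro z
  exact Or.inl (ne_of_gt (priorF_pos hm hp T _))

-- integrability of D integrand
lemma intD (hm : 0 < m) (hp : ∀ k, 0 < p k) (hγ0 : 0 < γ) (hγ1 : γ < 1)
    (T : ℝ) (hT : t < T) :
    Integrable (fun z : Fin d → ℝ =>
      priorF d m p ϑ T (y + z) ^ γ * gaussDensity d (T - t) z) := by
  have hs : (0:ℝ) < T - t := by linarith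
  have hbound : Integrable (fun z : Fin d → ℝ =>
      ∑ k, p k ^ γ * (likelihood d T (ϑ k) (y + z) ^ γ * gaussDensity d (T - t) z)) :=
    integrable_finset_sum _ fun k _ => (like_integrable d T (T - t) γ hs (ϑ k) y).const_mul _
  apply hbound.mono' ((Dintegrand_meas hm hp T γ).aestronglyMeasurable)
  filter_upwards with z
  have hφ := gauss_nonneg (d := d) hs z
  have hF := priorF_pos (ϑ := ϑ) hm hp T (y + z)
  rw [Real.norm_eq_abs, abs_of_nonneg (mul_nonneg (Real.rpow_nonneg hF.le _) hφ)]
  have h1 : priorF d m p ϑ T (y + z) ^ γ ≤ ∑ k, p k ^ γ * likelihood d T (ϑ k) (y + z) ^ γ := by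
    calc priorF d m p ϑ T (y + z) ^ γ
        ≤ ∑ k, (p k * likelihood d T (ϑ k) (y + z)) ^ γ := by
          rw [priorF]
          exact rpow_sum_le γ hγ0 hγ1.le _ _
            (fun k _ => (mul_pos (hp k) (likelihood_pos T _ _)).le)
      _ = ∑ k, p k ^ γ * likelihood d T (ϑ k) (y + z) ^ γ := by
          exact Finset.sum_congr rfl fun k _ =>
            Real.mul_rpow (hp k).le (likelihood_pos T _ _).le
  calc priorF d m p ϑ T (y + z) ^ γ * gaussDensity d (T - t) z
      ≤ (∑ k, p k ^ γ * likelihood d T (ϑ k) (y + z) ^ γ) * gaussDensity d (T - t) z :=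
        mul_le_mul_of_nonneg_right h1 hφ
    _ = ∑ k, p k ^ γ * (likelihood d T (ϑ k) (y + z) ^ γ * gaussDensity d (T - t) z) := by
        rw [Finset.sum_mul]; exact Finset.sum_congr rfl fun k _ => by ring

lemma Dfun_le (hm : 0 < m) (hp : ∀ k, 0 < p k) (hγ0 : 0 < γ) (hγ1 : γ < 1)
    (T : ℝ) (hT : t < T) :
    Dfun d m p ϑ γ t y T ≤ ∑ k, p k ^ γ * Bfun d m ϑ γ t y k T := by
  have hs : (0:ℝ) < T - t := by linarith
  have hbound : Integrable (fun z : Fin d → ℝ =>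
      ∑ k, p k ^ γ * (likelihood d T (ϑ k) (y + z) ^ γ * gaussDensity d (T - t) z)) :=
    integrable_finset_sum _ fun k _ => (like_integrable d T (T - t) γ hs (ϑ k) y).const_mul _
  have hmono := integral_mono (intD (ϑ := ϑ) (y := y) hm hp hγ0 hγ1 T hT) hbound ?_
  · rw [Dfun]
    refine hmono.trans_eq ?_
    rw [integral_finset_sum _ (fun k _ => (like_integrable d T (T - t) γ hs (ϑ k) y).const_mul _)]
    exact Finset.sum_congr rfl fun k _ => by
      rw [MeasureTheory.integral_const_mul, Bfun_eq k T hT]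
  · intro z
    have hφ := gauss_nonneg (d := d) hs z
    have h1 : priorF d m p ϑ T (y + z) ^ γ ≤ ∑ k, p k ^ γ * likelihood d T (ϑ k) (y + z) ^ γ := by
      calc priorF d m p ϑ T (y + z) ^ γ
          ≤ ∑ k, (p k * likelihood d T (ϑ k) (y + z)) ^ γ := by
            rw [priorF]
            exact rpow_sum_le γ hγ0 hγ1.le _ _
              (fun k _ => (mul_pos (hp k) (likelihood_pos T _ _)).le)
        _ = ∑ k, p k ^ γ * likelihood d T (ϑ k) (y + z) ^ γ :=
            Finset.sum_congr rfl fun k _ =>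
              Real.mul_rpow (hp k).le (likelihood_pos T _ _).le
    calc priorF d m p ϑ T (y + z) ^ γ * gaussDensity d (T - t) z
        ≤ (∑ k, p k ^ γ * likelihood d T (ϑ k) (y + z) ^ γ) * gaussDensity d (T - t) z :=
          mul_le_mul_of_nonneg_right h1 hφ
      _ = ∑ k, p k ^ γ * (likelihood d T (ϑ k) (y + z) ^ γ * gaussDensity d (T - t) z) := by
          rw [Finset.sum_mul]; exact Finset.sum_congr rfl fun k _ => by ring

lemma Dfun_ge (hm : 0 < m) (hp : ∀ k, 0 < p k) (hγ0 : 0 < γ) (hγ1 : γ < 1)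
    (n0 : Fin m) (T : ℝ) (hT : t < T) :
    p n0 ^ γ * Bfun d m ϑ γ t y n0 T ≤ Dfun d m p ϑ γ t y T := by
  have hs : (0:ℝ) < T - t := by linarith
  have hint : Integrable (fun z : Fin d → ℝ =>
      p n0 ^ γ * (likelihood d T (ϑ n0) (y + z) ^ γ * gaussDensity d (T - t) z)) :=
    (like_integrable d T (T - t) γ hs (ϑ n0) y).const_mul _
  have hmono := integral_mono hint (intD (ϑ := ϑ) (y := y) hm hp hγ0 hγ1 T hT) ?_
  · rw [Dfun]
    refine le_trans (le_of_eq ?_) hmono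
    rw [MeasureTheory.integral_const_mul, Bfun_eq n0 T hT]
  · intro z
    have hφ := gauss_nonneg (d := d) hs z
    have h1 : p n0 ^ γ * likelihood d T (ϑ n0) (y + z) ^ γ ≤ priorF d m p ϑ T (y + z) ^ γ := by
      rw [← Real.mul_rpow (hp n0).le (likelihood_pos T _ _).le]
      exact Real.rpow_le_rpow (mul_pos (hp n0) (likelihood_pos T _ _)).le
        (term_le_priorF hp n0 T _) hγ0.le
    simpa [mul_assoc] using mul_le_mul_of_nonneg_right h1 hφ

lemma rpow_gm1_mul {x γ : ℝ} (hx : 0 < x) : x ^ (γ - 1) * x = x ^ γ := by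
  rw [← Real.rpow_add_one (ne_of_gt hx)]; ring_nf

lemma Iintegrand_nonneg (hm : 0 < m) (hp : ∀ k, 0 < p k) (k : Fin m) (T : ℝ)
    (hs : 0 < T - t) (z : Fin d → ℝ) :
    0 ≤ priorF d m p ϑ T (y + z) ^ (γ - 1) * gaussDensity d (T - t) z *
      (p k * likelihood d T (ϑ k) (y + z)) := by
  have hF := priorF_pos (ϑ := ϑ) hm hp T (y + z)
  have hφ := gauss_nonneg (d := d) hs z
  have := (mul_pos (hp k) (likelihood_pos (v := ϑ k) T (y + z))).le
  positivity

lemma Iintegrand_le (hm : 0 < m) (hp : ∀ k, 0 < p k) (hγ0 : 0 < γ) (hγ1 : γ < 1)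
    (k : Fin m) (T : ℝ) (hs : 0 < T - t) (z : Fin d → ℝ) :
    priorF d m p ϑ T (y + z) ^ (γ - 1) * gaussDensity d (T - t) z *
      (p k * likelihood d T (ϑ k) (y + z))
      ≤ p k ^ γ * (likelihood d T (ϑ k) (y + z) ^ γ * gaussDensity d (T - t) z) := by
  have hφ := gauss_nonneg (d := d) hs z
  have ha : 0 < p k * likelihood d T (ϑ k) (y + z) :=
    mul_pos (hp k) (likelihood_pos T _ _)
  have h1 : priorF d m p ϑ T (y + z) ^ (γ - 1)
      ≤ (p k * likelihood d T (ϑ k) (y + z)) ^ (γ - 1) :=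
    Real.rpow_le_rpow_of_nonpos ha (term_le_priorF hp k T _) (by linarith)
  calc priorF d m p ϑ T (y + z) ^ (γ - 1) * gaussDensity d (T - t) z *
        (p k * likelihood d T (ϑ k) (y + z))
      ≤ (p k * likelihood d T (ϑ k) (y + z)) ^ (γ - 1) * gaussDensity d (T - t) z *
        (p k * likelihood d T (ϑ k) (y + z)) := by
        apply mul_le_mul_of_nonneg_right _ ha.le
        exact mul_le_mul_of_nonneg_right h1 hφ
    _ = p k ^ γ * (likelihood d T (ϑ k) (y + z) ^ γ * gaussDensity d (T - t) z) := by
        rw [show (p k * likelihood d T (ϑ k) (y + z)) ^ (γ - 1) * gaussDensity d (T - t) z *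
            (p k * likelihood d T (ϑ k) (y + z))
          = (p k * likelihood d T (ϑ k) (y + z)) ^ (γ - 1) *
            (p k * likelihood d T (ϑ k) (y + z)) * gaussDensity d (T - t) z by ring,
          rpow_gm1_mul ha, Real.mul_rpow (hp k).le (likelihood_pos T _ _).le]
        ring

lemma intI (hm : 0 < m) (hp : ∀ k, 0 < p k) (hγ0 : 0 < γ) (hγ1 : γ < 1)
    (k : Fin m) (T : ℝ) (hT : t < T) :
    Integrable (fun z : Fin d → ℝ =>
      priorF d m p ϑ T (y + z) ^ (γ - 1) * gaussDensity d (T - t) z *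
        (p k * likelihood d T (ϑ k) (y + z))) := by
  have hs : (0:ℝ) < T - t := by linarith
  have hbound : Integrable (fun z : Fin d → ℝ =>
      p k ^ γ * (likelihood d T (ϑ k) (y + z) ^ γ * gaussDensity d (T - t) z)) :=
    (like_integrable d T (T - t) γ hs (ϑ k) y).const_mul _
  apply hbound.mono'
  · apply Continuous.aestronglyMeasurable
    exact ((Dintegrand_meas hm hp T (γ - 1)).mul
      (continuous_const.mul (likelihood_continuous T (ϑ k))))
  · filter_upwards with z
    rw [Real.norm_eq_abs, abs_of_nonneg (Iintegrand_nonneg hm hp k T hs z)]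
    exact Iintegrand_le hm hp hγ0 hγ1 k T hs z

lemma Ifun_nonneg (hm : 0 < m) (hp : ∀ k, 0 < p k) (k : Fin m) (T : ℝ) (hT : t < T) :
    0 ≤ Ifun d m p ϑ γ t y k T :=
  integral_nonneg fun z => Iintegrand_nonneg hm hp k T (by linarith) z

lemma Ifun_le (hm : 0 < m) (hp : ∀ k, 0 < p k) (hγ0 : 0 < γ) (hγ1 : γ < 1)
    (k : Fin m) (T : ℝ) (hT : t < T) :
    Ifun d m p ϑ γ t y k T ≤ p k ^ γ * Bfun d m ϑ γ t y k T := by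
  have hs : (0:ℝ) < T - t := by linarith
  have hbound : Integrable (fun z : Fin d → ℝ =>
      p k ^ γ * (likelihood d T (ϑ k) (y + z) ^ γ * gaussDensity d (T - t) z)) :=
    (like_integrable d T (T - t) γ hs (ϑ k) y).const_mul _
  have hmono := integral_mono (intI (ϑ := ϑ) (y := y) hm hp hγ0 hγ1 k T hT) hbound
    (fun z => Iintegrand_le hm hp hγ0 hγ1 k T hs z)
  rw [Ifun]
  refine hmono.trans_eq ?_
  rw [MeasureTheory.integral_const_mul, Bfun_eq k T hT]

lemma Ifun_ge (hm : 0 < m) (hp : ∀ k, 0 < p k) (hγ0 : 0 < γ) (hγ1 : γ < 1)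
    (n0 : Fin m) (T : ℝ) (hT : t < T) :
    p n0 ^ γ * Bfun d m ϑ γ t y n0 T
      - ∑ k ∈ Finset.univ.erase n0, p k ^ γ * Bfun d m ϑ γ t y k T
      ≤ Ifun d m p ϑ γ t y n0 T := by
  have hs : (0:ℝ) < T - t := by linarith
  have hlhs : Integrable (fun z : Fin d → ℝ =>
      p n0 ^ γ * (likelihood d T (ϑ n0) (y + z) ^ γ * gaussDensity d (T - t) z)
      - ∑ k ∈ Finset.univ.erase n0,
          p k ^ γ * (likelihood d T (ϑ k) (y + z) ^ γ * gaussDensity d (T - t) z)) := by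
    apply Integrable.sub
    · exact (like_integrable d T (T - t) γ hs (ϑ n0) y).const_mul _
    · exact integrable_finset_sum _ fun k _ =>
        (like_integrable d T (T - t) γ hs (ϑ k) y).const_mul _
  have hmono := integral_mono hlhs (intI (ϑ := ϑ) (y := y) hm hp hγ0 hγ1 n0 T hT) ?_
  · rw [Ifun]
    refine le_trans (le_of_eq ?_) hmono
    rw [integral_sub ((like_integrable d T (T - t) γ hs (ϑ n0) y).const_mul _)
      (integrable_finset_sum _ fun k _ =>
        (like_integrable d T (T - t) γ hs (ϑ k) y).const_mul _),
      MeasureTheory.integral_const_mul, Bfun_eq n0 T hT,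
      integral_finset_sum _ (fun k _ =>
        (like_integrable d T (T - t) γ hs (ϑ k) y).const_mul _)]
    congr 1
    exact Finset.sum_congr rfl fun k _ => by
      rw [MeasureTheory.integral_const_mul, Bfun_eq k T hT]
  · intro z
    have hφ := gauss_nonneg (d := d) hs z
    set a := p n0 * likelihood d T (ϑ n0) (y + z) with ha_def
    set S := ∑ k ∈ Finset.univ.erase n0, p k * likelihood d T (ϑ k) (y + z) with hS_def
    have ha : 0 < a := mul_pos (hp n0) (likelihood_pos T _ _)
    have hS : 0 ≤ S := Finset.sum_nonneg fun k _ =>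
      (mul_pos (hp k) (likelihood_pos T _ _)).le
    have hFeq : priorF d m p ϑ T (y + z) = a + S := by
      rw [priorF, ← Finset.add_sum_erase _ _ (Finset.mem_univ n0)]
    have hkey := key_ineq γ a S hγ0 hγ1 ha hS
    have hSg : S ^ γ ≤ ∑ k ∈ Finset.univ.erase n0,
        p k ^ γ * likelihood d T (ϑ k) (y + z) ^ γ := by
      calc S ^ γ ≤ ∑ k ∈ Finset.univ.erase n0, (p k * likelihood d T (ϑ k) (y + z)) ^ γ :=
            rpow_sum_le γ hγ0 hγ1.le _ _ fun k _ =>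
              (mul_pos (hp k) (likelihood_pos T _ _)).le
        _ = _ := Finset.sum_congr rfl fun k _ =>
            Real.mul_rpow (hp k).le (likelihood_pos T _ _).le
    have hag : a ^ γ = p n0 ^ γ * likelihood d T (ϑ n0) (y + z) ^ γ :=
      Real.mul_rpow (hp n0).le (likelihood_pos T _ _).le
    have step1 : (a ^ (γ - 1) - a⁻¹ * S ^ γ) * gaussDensity d (T - t) z * a
        ≤ priorF d m p ϑ T (y + z) ^ (γ - 1) * gaussDensity d (T - t) z * a := by
      apply mul_le_mul_of_nonneg_right _ ha.le
      apply mul_le_mul_of_nonneg_right _ hφ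
      rw [hFeq]; exact hkey
    have step2 : (a ^ (γ - 1) - a⁻¹ * S ^ γ) * gaussDensity d (T - t) z * a
        = a ^ γ * gaussDensity d (T - t) z - S ^ γ * gaussDensity d (T - t) z := by
      have h1 : a ^ (γ - 1) * a = a ^ γ := rpow_gm1_mul ha
      have h2 : a⁻¹ * a = 1 := inv_mul_cancel₀ (ne_of_gt ha)
      calc (a ^ (γ - 1) - a⁻¹ * S ^ γ) * gaussDensity d (T - t) z * a
          = (a ^ (γ - 1) * a) * gaussDensity d (T - t) z
            - (a⁻¹ * a) * (S ^ γ * gaussDensity d (T - t) z) := by ring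
        _ = _ := by rw [h1, h2, one_mul]
    calc p n0 ^ γ * (likelihood d T (ϑ n0) (y + z) ^ γ * gaussDensity d (T - t) z)
        - ∑ k ∈ Finset.univ.erase n0,
            p k ^ γ * (likelihood d T (ϑ k) (y + z) ^ γ * gaussDensity d (T - t) z)
        ≤ a ^ γ * gaussDensity d (T - t) z - S ^ γ * gaussDensity d (T - t) z := by
          have e1 : p n0 ^ γ * (likelihood d T (ϑ n0) (y + z) ^ γ * gaussDensity d (T - t) z)
              = a ^ γ * gaussDensity d (T - t) z := by rw [hag]; ring
          have e2 : ∑ k ∈ Finset.univ.erase n0,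
              p k ^ γ * (likelihood d T (ϑ k) (y + z) ^ γ * gaussDensity d (T - t) z)
              = (∑ k ∈ Finset.univ.erase n0,
                  p k ^ γ * likelihood d T (ϑ k) (y + z) ^ γ) * gaussDensity d (T - t) z := by
            rw [Finset.sum_mul]; exact Finset.sum_congr rfl fun k _ => by ring
          rw [e1, e2]
          have := mul_le_mul_of_nonneg_right hSg hφ
          linarith
      _ ≤ _ := by rw [← step2]; exact step1

end Aux

/-- Long-horizon limit of the Bayesian optimal investment fraction for `0 < γ < 1`
(risk aversion `α = 1 - 1/γ < 0`) when the Euclidean norms `‖ϑ_k‖` are strictly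
increasing: `lim_{T → ∞} κ(t, T, y) = γ (σᵀ)⁻¹ ϑ_1`, the Merton fraction of the drift
scenario with the smallest Euclidean norm. -/
theorem stmt_11 (d m : ℕ) (hd : 1 ≤ d) (hm : 1 ≤ m)
    (σ : Matrix (Fin d) (Fin d) ℝ) (hσ : IsUnit σ.det)
    (p : Fin m → ℝ) (hp : ∀ k, 0 < p k) (hpsum : ∑ k, p k = 1)
    (ϑ : Fin m → Fin d → ℝ)
    (hnorm : StrictMono fun k : Fin m => Real.sqrt (∑ i, ϑ k i ^ 2))
    (γ : ℝ) (hγ0 : 0 < γ) (hγ1 : γ < 1) (t : ℝ) (ht : 0 ≤ t) (y : Fin d → ℝ) :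
    Tendsto (fun T => kappa d m σ p ϑ γ t T y) atTop
      (nhds (γ • ((σ.transpose)⁻¹).mulVec (ϑ ⟨0, by omega⟩))) := by

  classical
  have hm' : 0 < m := hm
  set n0 : Fin m := ⟨0, by omega⟩ with hn0def
  -- strict norm ordering
  have hb : ∀ k, k ≠ n0 → (∑ i, ϑ n0 i ^ 2) < (∑ i, ϑ k i ^ 2) := by
    intro k hk
    have hlt : n0 < k := by
      rw [Fin.lt_def]
      exact Nat.pos_of_ne_zero fun h => hk (Fin.ext (by simp [hn0def, h]))
    have := hnorm hlt
    by_contra hle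
    push_neg at hle
    exact absurd (Real.sqrt_le_sqrt hle) (not_le.2 this)
  -- exponential ratio functions
  set c : Fin m → ℝ := fun k => γ * ((∑ i, y i * ϑ k i) - (∑ i, y i * ϑ n0 i))
      - t * γ ^ 2 * ((∑ i, ϑ k i ^ 2) - (∑ i, ϑ n0 i ^ 2)) / 2 with hc
  set a : Fin m → ℝ := fun k => (γ ^ 2 - γ) * ((∑ i, ϑ k i ^ 2) - (∑ i, ϑ n0 i ^ 2)) / 2 with ha
  have hBratio : ∀ (k : Fin m) (T : ℝ),
      Bfun d m ϑ γ t y k T / Bfun d m ϑ γ t y n0 T = Real.exp (c k + a k * T) := by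
    intro k T
    rw [Bfun, Bfun, ← Real.exp_sub]
    congr 1
    simp only [hc, ha]
    ring
  have hexp0 : ∀ k, k ≠ n0 → Tendsto (fun T => Real.exp (c k + a k * T)) atTop (𝓝 0) := by
    intro k hk
    apply Real.tendsto_exp_atBot.comp
    apply tendsto_atBot_add_const_left
    have hak : a k < 0 := by
      have hbk := hb k hk
      have h1 : γ ^ 2 - γ < 0 := by nlinarith
      have h2 : 0 < (∑ i, ϑ k i ^ 2) - (∑ i, ϑ n0 i ^ 2) := by linarith
      simp only [ha]
      nlinarith
    exact (tendsto_const_mul_atBot_of_neg hak).2 tendsto_id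
  have hBk : ∀ (k : Fin m) (T : ℝ),
      Bfun d m ϑ γ t y k T = Real.exp (c k + a k * T) * Bfun d m ϑ γ t y n0 T := by
    intro k T
    have h := hBratio k T
    rwa [div_eq_iff (ne_of_gt (Bfun_pos n0 T))] at h
  set ε : ℝ → ℝ := fun T => ∑ k ∈ Finset.univ.erase n0, p k ^ γ * Real.exp (c k + a k * T)
    with hε
  have hεlim : Tendsto ε atTop (𝓝 0) := by
    have h : Tendsto ε atTop (𝓝 (∑ k ∈ Finset.univ.erase n0, p k ^ γ * 0)) := by
      apply tendsto_finset_sum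
      intro k hk
      exact ((hexp0 k (Finset.ne_of_mem_erase hk)).const_mul _)
    simpa using h
  have hB0pos : ∀ T : ℝ, 0 < Bfun d m ϑ γ t y n0 T := fun T => Bfun_pos n0 T
  have hsum_erase : ∀ T : ℝ, ∑ k ∈ Finset.univ.erase n0, p k ^ γ * Bfun d m ϑ γ t y k T
      = ε T * Bfun d m ϑ γ t y n0 T := by
    intro T
    simp only [hε, Finset.sum_mul]
    exact Finset.sum_congr rfl fun k _ => by rw [hBk k T]; ring
  have hsum_univ : ∀ T : ℝ, ∑ k, p k ^ γ * Bfun d m ϑ γ t y k T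
      = (p n0 ^ γ + ε T) * Bfun d m ϑ γ t y n0 T := by
    intro T
    rw [← Finset.add_sum_erase _ _ (Finset.mem_univ n0), hsum_erase T]
    ring
  have hDlim : Tendsto (fun T => Dfun d m p ϑ γ t y T / Bfun d m ϑ γ t y n0 T) atTop
      (𝓝 (p n0 ^ γ)) := by
    apply tendsto_of_tendsto_of_tendsto_of_le_of_le' (g := fun _ : ℝ => p n0 ^ γ)
      (h := fun T => p n0 ^ γ + ε T) tendsto_const_nhds
      (by simpa using (tendsto_const_nhds (x := p n0 ^ γ) (f := atTop)).add hεlim)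
    · filter_upwards [eventually_gt_atTop t] with T hT
      rw [le_div_iff₀ (hB0pos T)]
      exact Dfun_ge hm' hp hγ0 hγ1 n0 T hT
    · filter_upwards [eventually_gt_atTop t] with T hT
      rw [div_le_iff₀ (hB0pos T), ← hsum_univ T]
      exact Dfun_le hm' hp hγ0 hγ1 T hT
  have hI0lim : Tendsto (fun T => Ifun d m p ϑ γ t y n0 T / Bfun d m ϑ γ t y n0 T) atTop
      (𝓝 (p n0 ^ γ)) := by
    apply tendsto_of_tendsto_of_tendsto_of_le_of_le' (g := fun T => p n0 ^ γ - ε T)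
      (h := fun _ : ℝ => p n0 ^ γ)
      (by simpa using (tendsto_const_nhds (x := p n0 ^ γ) (f := atTop)).sub hεlim)
      tendsto_const_nhds
    · filter_upwards [eventually_gt_atTop t] with T hT
      rw [le_div_iff₀ (hB0pos T)]
      calc (p n0 ^ γ - ε T) * Bfun d m ϑ γ t y n0 T
          = p n0 ^ γ * Bfun d m ϑ γ t y n0 T
            - ∑ k ∈ Finset.univ.erase n0, p k ^ γ * Bfun d m ϑ γ t y k T := by
            rw [hsum_erase T]; ring
        _ ≤ Ifun d m p ϑ γ t y n0 T := Ifun_ge hm' hp hγ0 hγ1 n0 T hT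
    · filter_upwards [eventually_gt_atTop t] with T hT
      rw [div_le_iff₀ (hB0pos T)]
      exact Ifun_le hm' hp hγ0 hγ1 n0 T hT
  have hIklim : ∀ k, k ≠ n0 →
      Tendsto (fun T => Ifun d m p ϑ γ t y k T / Bfun d m ϑ γ t y n0 T) atTop (𝓝 0) := by
    intro k hk
    apply tendsto_of_tendsto_of_tendsto_of_le_of_le' (g := fun _ : ℝ => (0:ℝ))
      (h := fun T => p k ^ γ * Real.exp (c k + a k * T)) tendsto_const_nhds
      (by simpa using (hexp0 k hk).const_mul (p k ^ γ))
    · filter_upwards [eventually_gt_atTop t] with T hT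
      exact div_nonneg (Ifun_nonneg hm' hp k T hT) (hB0pos T).le
    · filter_upwards [eventually_gt_atTop t] with T hT
      rw [div_le_iff₀ (hB0pos T)]
      calc Ifun d m p ϑ γ t y k T ≤ p k ^ γ * Bfun d m ϑ γ t y k T :=
            Ifun_le hm' hp hγ0 hγ1 k T hT
        _ = p k ^ γ * Real.exp (c k + a k * T) * Bfun d m ϑ γ t y n0 T := by
            rw [hBk k T]; ring
  have hp0γ : (p n0 : ℝ) ^ γ ≠ 0 := by
    have := hp n0
    positivity
  have hratio : ∀ k : Fin m, Tendsto (fun T => Ifun d m p ϑ γ t y k T / Dfun d m p ϑ γ t y T)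
      atTop (𝓝 (if k = n0 then (1:ℝ) else 0)) := by
    intro k
    have heq : ∀ᶠ T in atTop,
        (Ifun d m p ϑ γ t y k T / Bfun d m ϑ γ t y n0 T)
          / (Dfun d m p ϑ γ t y T / Bfun d m ϑ γ t y n0 T)
        = Ifun d m p ϑ γ t y k T / Dfun d m p ϑ γ t y T := by
      filter_upwards [eventually_gt_atTop t] with T hT
      exact div_div_div_cancel_right₀ (ne_of_gt (hB0pos T)) _ _
    by_cases hk : k = n0
    · subst hk
      have h := hI0lim.div hDlim hp0γ
      rw [div_self hp0γ] at h
      simpa [if_pos rfl] using h.congr' heq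
    · have h := (hIklim k hk).div hDlim hp0γ
      rw [zero_div] at h
      simpa [if_neg hk] using h.congr' heq
  have hkap : ∀ T : ℝ, t < T → kappa d m σ p ϑ γ t T y
      = γ • ((σ.transpose)⁻¹).mulVec
          (∑ k, (Ifun d m p ϑ γ t y k T / Dfun d m p ϑ γ t y T) • ϑ k) := by
    intro T hT
    rw [kappa]
    congr 1
    have hNint : (∫ z : Fin d → ℝ,
        (priorF d m p ϑ T (y + z) ^ (γ - 1) * gaussDensity d (T - t) z) •
          ∑ k, (p k * likelihood d T (ϑ k) (y + z)) • ϑ k)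
        = ∑ k, Ifun d m p ϑ γ t y k T • ϑ k := by
      have hrw : ∀ z : Fin d → ℝ,
          (priorF d m p ϑ T (y + z) ^ (γ - 1) * gaussDensity d (T - t) z) •
            ∑ k, (p k * likelihood d T (ϑ k) (y + z)) • ϑ k
          = ∑ k, (priorF d m p ϑ T (y + z) ^ (γ - 1) * gaussDensity d (T - t) z *
              (p k * likelihood d T (ϑ k) (y + z))) • ϑ k := by
        intro z
        rw [Finset.smul_sum]
        exact Finset.sum_congr rfl fun k _ => smul_smul _ _ _
      simp_rw [hrw]
      rw [integral_finset_sum _ (fun k _ =>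
        ((intI (ϑ := ϑ) (y := y) hm' hp hγ0 hγ1 k T hT)).smul_const (ϑ k))]
      exact Finset.sum_congr rfl fun k _ => by rw [integral_smul_const]; rfl
    rw [show (∫ z : Fin d → ℝ, priorF d m p ϑ T (y + z) ^ γ * gaussDensity d (T - t) z)
        = Dfun d m p ϑ γ t y T from rfl, hNint, Finset.smul_sum,
      show (∑ k, (Dfun d m p ϑ γ t y T)⁻¹ • Ifun d m p ϑ γ t y k T • ϑ k)
          = ∑ k, (Ifun d m p ϑ γ t y k T / Dfun d m p ϑ γ t y T) • ϑ k from
        Finset.sum_congr rfl fun k _ => by rw [smul_smul, div_eq_inv_mul]]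
  have hvlim : Tendsto (fun T => ∑ k, (Ifun d m p ϑ γ t y k T / Dfun d m p ϑ γ t y T) • ϑ k)
      atTop (𝓝 (ϑ n0)) := by
    have h1 : Tendsto (fun T => ∑ k, (Ifun d m p ϑ γ t y k T / Dfun d m p ϑ γ t y T) • ϑ k)
        atTop (𝓝 (∑ k, (if k = n0 then (1:ℝ) else 0) • ϑ k)) :=
      tendsto_finset_sum _ fun k _ => (hratio k).smul_const (ϑ k)
    have h2 : (∑ k, (if k = n0 then (1:ℝ) else 0) • ϑ k) = ϑ n0 := by
      simp [ite_smul]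
    rwa [h2] at h1
  have hcont : Continuous (fun v : Fin d → ℝ => γ • ((σ.transpose)⁻¹).mulVec v) :=
    (continuous_const.matrix_mulVec continuous_id).const_smul γ
  have hfin := (hcont.tendsto (ϑ n0)).comp hvlim
  apply hfin.congr'
  filter_upwards [eventually_gt_atTop t] with T hT
  exact (hkap T hT).symm
end

section
/- In the Bayesian investment model with a two-point prior, define F̂(t, T, y) := [∫_{ℝ^d} L_T(ϑ̲, y+z) F(T, y+z)^{γ−1} φ_{T−t}(z) dz] / [∫_{ℝ^d} F(T, y+z)^γ φ_{T−t}(z) dz] and a(t, T, y) := 1 − (1−p) F̂(t, T, y). Then for all 0 ≤ t < T, y ∈ ℝ^d and γ > 0: (i) a(t, T, y) ∈ [0, 1], and (ii) the optimal investment fraction is the convex combination κ(t, T, y) = a(t, T, y) · γ (σ^⊤)^{−1} ϑ̄ + (1 − a(t, T, y)) · γ (σ^⊤)^{−1} ϑ̲ of the two Merton fractions. -/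
open MeasureTheory Real

/-- `F(t, z) = p L_t(ϑ̄, z) + (1-p) L_t(ϑ̲, z)` for the two-point prior. -/
noncomputable def twoPointF (d : ℕ) (p : ℝ) (ϑb ϑl : Fin d → ℝ) (t : ℝ)
    (z : Fin d → ℝ) : ℝ :=
  p * likelihood d t ϑb z + (1 - p) * likelihood d t ϑl z

/-- `F̂(t, T, y) = [∫ L_T(ϑ̲, y+z) F(T, y+z)^{γ-1} φ_{T-t}(z) dz] /
[∫ F(T, y+z)^γ φ_{T-t}(z) dz]`. -/
noncomputable def twoPointFhat (d : ℕ) (p : ℝ) (ϑb ϑl : Fin d → ℝ) (γ t T : ℝ)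
    (y : Fin d → ℝ) : ℝ :=
  (∫ z : Fin d → ℝ, likelihood d T ϑl (y + z) *
      twoPointF d p ϑb ϑl T (y + z) ^ (γ - 1) * gaussDensity d (T - t) z) /
  (∫ z : Fin d → ℝ, twoPointF d p ϑb ϑl T (y + z) ^ γ * gaussDensity d (T - t) z)

/-- Optimal Bayesian investment fraction for the two-point prior. -/
noncomputable def twoPointKappa (d : ℕ) (σ : Matrix (Fin d) (Fin d) ℝ) (p : ℝ)
    (ϑb ϑl : Fin d → ℝ) (γ t T : ℝ) (y : Fin d → ℝ) : Fin d → ℝ :=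
  γ • ((σ.transpose)⁻¹).mulVec
    ((∫ z : Fin d → ℝ, twoPointF d p ϑb ϑl T (y + z) ^ γ * gaussDensity d (T - t) z)⁻¹ •
      ∫ z : Fin d → ℝ,
        (twoPointF d p ϑb ϑl T (y + z) ^ (γ - 1) * gaussDensity d (T - t) z) •
          ((p * likelihood d T ϑb (y + z)) • ϑb +
            ((1 - p) * likelihood d T ϑl (y + z)) • ϑl))

lemma lik_pos (d : ℕ) (T : ℝ) (ϑ w : Fin d → ℝ) : 0 < likelihood d T ϑ w := exp_pos _

lemma gauss_pos {d : ℕ} {s : ℝ} (hs : 0 < s) (z : Fin d → ℝ) : 0 < gaussDensity d s z :=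
  mul_pos (rpow_pos_of_pos (by positivity) _) (exp_pos _)

lemma F_pos {d : ℕ} {p : ℝ} (hp0 : 0 < p) (hp1 : p < 1) (ϑb ϑl : Fin d → ℝ) (T : ℝ)
    (w : Fin d → ℝ) : 0 < twoPointF d p ϑb ϑl T w := by
  have h1 : 0 < 1 - p := by linarith
  have h2 := lik_pos d T ϑb w
  have h3 := lik_pos d T ϑl w
  unfold twoPointF
  positivity

lemma cont_lik (d : ℕ) (T : ℝ) (ϑ y : Fin d → ℝ) :
    Continuous fun z : Fin d → ℝ => likelihood d T ϑ (y + z) := by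
  unfold likelihood; fun_prop

lemma cont_gauss (d : ℕ) (s : ℝ) : Continuous fun z : Fin d → ℝ => gaussDensity d s z := by
  unfold gaussDensity; fun_prop

lemma lik_rpow (d : ℕ) (T : ℝ) (ϑ y z : Fin d → ℝ) (α : ℝ) :
    likelihood d T ϑ (y + z) ^ α
      = Real.exp ((∑ i, z i * (α * ϑ i)) + α * ((∑ i, y i * ϑ i) - (∑ i, ϑ i ^ 2) * T / 2)) := by
  unfold likelihood
  rw [← Real.exp_mul]
  congr 1
  have h1 : ∑ i, (y + z) i * ϑ i = (∑ i, y i * ϑ i) + ∑ i, z i * ϑ i := by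
    rw [← Finset.sum_add_distrib]
    exact Finset.sum_congr rfl fun i _ => by simp [Pi.add_apply]; ring
  have h2 : ∑ i, z i * (α * ϑ i) = α * ∑ i, z i * ϑ i := by
    rw [Finset.mul_sum]
    exact Finset.sum_congr rfl fun i _ => by ring
  rw [h1, h2]
  ring

lemma int1d {a : ℝ} (ha : 0 < a) (b : ℝ) :
    Integrable fun x : ℝ => Real.exp (-a * x ^ 2 + b * x) := by
  have h := (integrable_cexp_quadratic (b := (a:ℂ)) (by simpa using ha) (b:ℂ) 0).norm
  simp only [Complex.norm_exp] at h
  convert h using 2 with x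
  have : -(a:ℂ) * (x:ℂ) ^ 2 + (b:ℂ) * (x:ℂ) + 0 = ((-a * x ^ 2 + b * x : ℝ) : ℂ) := by
    push_cast; ring
  rw [this, Complex.ofReal_re]

lemma integrable_exp_lin_gauss (d : ℕ) {s : ℝ} (hs : 0 < s) (v : Fin d → ℝ) (c : ℝ) :
    Integrable fun z : Fin d → ℝ => Real.exp ((∑ i, z i * v i) + c) * gaussDensity d s z := by
  have h2πs : (0:ℝ) < 2 * π * s := by positivity
  have key : (fun z : Fin d → ℝ => Real.exp ((∑ i, z i * v i) + c) * gaussDensity d s z)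
      = fun z => Real.exp c * ∏ i, ((2 * π * s) ^ (-(1:ℝ) / 2) *
          Real.exp (-(1/(2*s)) * (z i) ^ 2 + v i * (z i))) := by
    funext z
    have hW : ∑ i, (-(1/(2*s)) * (z i) ^ 2 + v i * (z i))
        = (∑ i, z i * v i) + -(∑ i, z i ^ 2)/(2*s) := by
      rw [Finset.sum_add_distrib, add_comm]
      congr 1
      · exact Finset.sum_congr rfl fun i _ => mul_comm _ _
      · rw [← Finset.mul_sum]; ring
    unfold gaussDensity
    rw [Finset.prod_mul_distrib, Finset.prod_const, ← Real.exp_sum, Finset.card_univ,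
      Fintype.card_fin, ← Real.rpow_natCast _ d, ← Real.rpow_mul h2πs.le, hW,
      Real.exp_add, Real.exp_add]
    have : (-(1:ℝ)/2) * (d:ℝ) = -(d:ℝ)/2 := by ring
    rw [this]
    ring
  rw [key]
  exact (Integrable.fintype_prod (f := fun i x =>
    (2 * π * s) ^ (-(1:ℝ) / 2) * Real.exp (-(1/(2*s)) * x ^ 2 + v i * x))
    (fun i => (int1d (by positivity) (v i)).const_mul _)).const_mul _

lemma integrable_likpow_gauss (d : ℕ) {s : ℝ} (hs : 0 < s) (T α β : ℝ)
    (ϑ ϑ' y : Fin d → ℝ) :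
    Integrable fun z : Fin d → ℝ => likelihood d T ϑ (y + z) ^ α *
      likelihood d T ϑ' (y + z) ^ β * gaussDensity d s z := by
  have key : (fun z : Fin d → ℝ => likelihood d T ϑ (y + z) ^ α *
      likelihood d T ϑ' (y + z) ^ β * gaussDensity d s z)
      = fun z => Real.exp ((∑ i, z i * (α * ϑ i + β * ϑ' i)) +
          (α * ((∑ i, y i * ϑ i) - (∑ i, ϑ i ^ 2) * T / 2) +
           β * ((∑ i, y i * ϑ' i) - (∑ i, ϑ' i ^ 2) * T / 2))) * gaussDensity d s z := by
    funext z
    rw [lik_rpow, lik_rpow, ← Real.exp_add]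
    congr 2
    have : ∑ i, z i * (α * ϑ i + β * ϑ' i)
        = (∑ i, z i * (α * ϑ i)) + ∑ i, z i * (β * ϑ' i) := by
      rw [← Finset.sum_add_distrib]
      exact Finset.sum_congr rfl fun i _ => by ring
    rw [this]
    ring
  rw [key]
  exact integrable_exp_lin_gauss d hs _ _

lemma add_rpow_le {a b : ℝ} (ha : 0 < a) (hb : 0 < b) (s : ℝ) :
    (a + b) ^ s ≤ ((2:ℝ) ^ s + 1) * (a ^ s + b ^ s) := by
  have has := Real.rpow_pos_of_pos ha s
  have hbs := Real.rpow_pos_of_pos hb s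
  have h2s : (0:ℝ) < (2:ℝ) ^ s := Real.rpow_pos_of_pos two_pos s
  rcases le_or_gt 0 s with hs | hs
  · have hmax : a + b ≤ 2 * max a b := by
      rcases le_total a b with h | h
      · rw [max_eq_right h]; linarith
      · rw [max_eq_left h]; linarith
    have h1 : (a + b) ^ s ≤ (2 * max a b) ^ s :=
      Real.rpow_le_rpow (by positivity) hmax hs
    have h2 : (2 * max a b) ^ s = 2 ^ s * (max a b) ^ s :=
      Real.mul_rpow (by norm_num) (le_max_of_le_left ha.le)
    have h3 : (max a b) ^ s ≤ a ^ s + b ^ s := by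
      rcases le_total a b with h | h
      · rw [max_eq_right h]; linarith
      · rw [max_eq_left h]; linarith
    calc (a + b) ^ s ≤ 2 ^ s * (max a b) ^ s := by rw [← h2]; exact h1
      _ ≤ 2 ^ s * (a ^ s + b ^ s) := by nlinarith
      _ ≤ (2 ^ s + 1) * (a ^ s + b ^ s) := by nlinarith
  · have h1 : (a + b) ^ s ≤ a ^ s :=
      Real.rpow_le_rpow_of_nonpos ha (by linarith) hs.le
    nlinarith

lemma integrable_h (d : ℕ) {p s : ℝ} (T γ : ℝ) (hp0 : 0 < p) (hp1 : p < 1) (hs : 0 < s)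
    (ϑ ϑb ϑl y : Fin d → ℝ) :
    Integrable fun z : Fin d → ℝ => likelihood d T ϑ (y + z) *
      twoPointF d p ϑb ϑl T (y + z) ^ (γ - 1) * gaussDensity d s z := by
  have hq : 0 < 1 - p := by linarith
  have hC : (0:ℝ) < (2:ℝ) ^ (γ-1) + 1 := by positivity
  refine Integrable.mono' (g := fun z => ((2:ℝ) ^ (γ-1) + 1) * ((p ^ (γ-1)) *
      (likelihood d T ϑ (y+z) ^ (1:ℝ) * likelihood d T ϑb (y+z) ^ (γ-1) * gaussDensity d s z) +
      ((1-p) ^ (γ-1)) *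
      (likelihood d T ϑ (y+z) ^ (1:ℝ) * likelihood d T ϑl (y+z) ^ (γ-1) * gaussDensity d s z)))
    ?_ ?_ ?_
  · exact (((integrable_likpow_gauss d hs T 1 (γ-1) ϑ ϑb y).const_mul _).add
      ((integrable_likpow_gauss d hs T 1 (γ-1) ϑ ϑl y).const_mul _)).const_mul _
  · apply Continuous.aestronglyMeasurable
    refine ((cont_lik d T ϑ y).mul ?_).mul (cont_gauss d s)
    refine Continuous.rpow_const ?_ fun z => Or.inl (F_pos hp0 hp1 ϑb ϑl T (y+z)).ne'
    exact ((cont_lik d T ϑb y).const_smul p).add (((cont_lik d T ϑl y).const_smul (1-p)))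
  · filter_upwards with z
    have hLϑ := lik_pos d T ϑ (y+z)
    have hLb := lik_pos d T ϑb (y+z)
    have hLl := lik_pos d T ϑl (y+z)
    have hφ := gauss_pos hs z
    have hF := F_pos hp0 hp1 ϑb ϑl T (y+z)
    rw [Real.norm_of_nonneg (by positivity)]
    have h1 : twoPointF d p ϑb ϑl T (y+z) ^ (γ-1) ≤ ((2:ℝ) ^ (γ-1) + 1) *
        (p^(γ-1) * likelihood d T ϑb (y+z) ^ (γ-1)
          + (1-p)^(γ-1) * likelihood d T ϑl (y+z) ^ (γ-1)) := by
      have h := add_rpow_le (mul_pos hp0 hLb) (mul_pos hq hLl) (γ-1)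
      rw [Real.mul_rpow hp0.le hLb.le, Real.mul_rpow hq.le hLl.le] at h
      exact h
    calc likelihood d T ϑ (y+z) * twoPointF d p ϑb ϑl T (y+z) ^ (γ-1) * gaussDensity d s z
        = (likelihood d T ϑ (y+z) * gaussDensity d s z)
            * twoPointF d p ϑb ϑl T (y+z) ^ (γ-1) := by ring
      _ ≤ (likelihood d T ϑ (y+z) * gaussDensity d s z) * (((2:ℝ) ^ (γ-1) + 1) *
            (p^(γ-1) * likelihood d T ϑb (y+z) ^ (γ-1)
              + (1-p)^(γ-1) * likelihood d T ϑl (y+z) ^ (γ-1))) := by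
          exact mul_le_mul_of_nonneg_left h1 (by positivity)
      _ = _ := by rw [Real.rpow_one]; ring

/-- With a two-point prior, the weight `a(t,T,y) = 1 - (1-p) F̂(t,T,y)` lies in `[0,1]` and
the optimal Bayesian investment fraction is the convex combination
`κ(t,T,y) = a · γ(σᵀ)⁻¹ϑ̄ + (1-a) · γ(σᵀ)⁻¹ϑ̲` of the two Merton fractions. -/
theorem stmt_15 (d : ℕ) (hd : 1 ≤ d)
    (σ : Matrix (Fin d) (Fin d) ℝ) (hσ : IsUnit σ.det)
    (ϑb ϑl : Fin d → ℝ) (p : ℝ) (hp0 : 0 < p) (hp1 : p < 1)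
    (γ : ℝ) (hγ : 0 < γ) (t T : ℝ) (ht : 0 ≤ t) (htT : t < T) (y : Fin d → ℝ) :
    0 ≤ 1 - (1 - p) * twoPointFhat d p ϑb ϑl γ t T y ∧
    1 - (1 - p) * twoPointFhat d p ϑb ϑl γ t T y ≤ 1 ∧
    twoPointKappa d σ p ϑb ϑl γ t T y
      = (1 - (1 - p) * twoPointFhat d p ϑb ϑl γ t T y) •
          (γ • ((σ.transpose)⁻¹).mulVec ϑb) +
        (1 - (1 - (1 - p) * twoPointFhat d p ϑb ϑl γ t T y)) •
          (γ • ((σ.transpose)⁻¹).mulVec ϑl) := by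
  have hs : 0 < T - t := by linarith
  have hq : 0 < 1 - p := by linarith
  have hIb := integrable_h d T γ hp0 hp1 hs ϑb ϑb ϑl y
  have hIl := integrable_h d T γ hp0 hp1 hs ϑl ϑb ϑl y
  set NB := ∫ z : Fin d → ℝ, likelihood d T ϑb (y + z) *
      twoPointF d p ϑb ϑl T (y + z) ^ (γ - 1) * gaussDensity d (T - t) z with hNB
  set NL := ∫ z : Fin d → ℝ, likelihood d T ϑl (y + z) *
      twoPointF d p ϑb ϑl T (y + z) ^ (γ - 1) * gaussDensity d (T - t) z with hNL
  set D := ∫ z : Fin d → ℝ, twoPointF d p ϑb ϑl T (y + z) ^ γ * gaussDensity d (T - t) z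
    with hD
  -- pointwise decomposition of the denominator integrand
  have hD_eq : (fun z : Fin d → ℝ =>
      twoPointF d p ϑb ϑl T (y + z) ^ γ * gaussDensity d (T - t) z)
      = fun z => p * (likelihood d T ϑb (y + z) *
          twoPointF d p ϑb ϑl T (y + z) ^ (γ - 1) * gaussDensity d (T - t) z)
        + (1 - p) * (likelihood d T ϑl (y + z) *
          twoPointF d p ϑb ϑl T (y + z) ^ (γ - 1) * gaussDensity d (T - t) z) := by
    funext z
    have hF := F_pos hp0 hp1 ϑb ϑl T (y + z)
    have h1 : twoPointF d p ϑb ϑl T (y + z) ^ γ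
        = twoPointF d p ϑb ϑl T (y + z) ^ (γ - 1) * twoPointF d p ϑb ϑl T (y + z) := by
      rw [show γ = (γ - 1) + 1 by ring, Real.rpow_add_one hF.ne' (γ - 1)]
      ring_nf
    rw [h1]
    unfold twoPointF
    ring
  have hDval : D = p * NB + (1 - p) * NL := by
    rw [hD, hD_eq, integral_add (hIb.const_mul p) (hIl.const_mul (1 - p)),
      integral_const_mul, integral_const_mul, ← hNB, ← hNL]
  have hNB0 : 0 ≤ NB := by
    rw [hNB]
    refine integral_nonneg fun z => ?_
    have := lik_pos d T ϑb (y + z)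
    have := F_pos hp0 hp1 ϑb ϑl T (y + z)
    have := gauss_pos hs z
    positivity
  have hNLpos : 0 < NL := by
    rw [hNL, integral_pos_iff_support_of_nonneg]
    · have : (Function.support fun z : Fin d → ℝ => likelihood d T ϑl (y + z) *
          twoPointF d p ϑb ϑl T (y + z) ^ (γ - 1) * gaussDensity d (T - t) z) = Set.univ := by
        refine Set.eq_univ_of_forall fun z => Function.mem_support.mpr (ne_of_gt ?_)
        have := lik_pos d T ϑl (y + z)
        have := F_pos hp0 hp1 ϑb ϑl T (y + z)
        have := gauss_pos hs z
        positivity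
      rw [this]
      exact isOpen_univ.measure_pos volume Set.univ_nonempty
    · intro z
      have := lik_pos d T ϑl (y + z)
      have := F_pos hp0 hp1 ϑb ϑl T (y + z)
      have := gauss_pos hs z
      positivity
    · exact hIl
  have hDpos : 0 < D := by
    rw [hDval]; nlinarith
  have hfhat : twoPointFhat d p ϑb ϑl γ t T y = NL / D := rfl
  refine ⟨?_, ?_, ?_⟩
  · rw [hfhat]
    have ha : 1 - (1 - p) * (NL / D) = p * NB / D := by
      field_simp
      rw [hDval]; ring
    rw [ha]
    positivity
  · rw [hfhat]
    have : 0 ≤ (1 - p) * (NL / D) := by positivity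
    linarith
  · -- the vector identity
    have hvec : (fun z : Fin d → ℝ =>
        (twoPointF d p ϑb ϑl T (y + z) ^ (γ - 1) * gaussDensity d (T - t) z) •
          ((p * likelihood d T ϑb (y + z)) • ϑb +
            ((1 - p) * likelihood d T ϑl (y + z)) • ϑl))
        = fun z => (p * (likelihood d T ϑb (y + z) *
            twoPointF d p ϑb ϑl T (y + z) ^ (γ - 1) * gaussDensity d (T - t) z)) • ϑb
          + ((1 - p) * (likelihood d T ϑl (y + z) *
            twoPointF d p ϑb ϑl T (y + z) ^ (γ - 1) * gaussDensity d (T - t) z)) • ϑl := by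
      funext z
      rw [smul_add, smul_smul, smul_smul]
      congr 1
      · congr 1; ring
      · congr 1; ring
    rw [twoPointKappa, hfhat, ← hD]
    rw [hvec, integral_add ((hIb.const_mul p).smul_const ϑb)
        ((hIl.const_mul (1 - p)).smul_const ϑl), integral_smul_const, integral_smul_const,
      integral_const_mul, integral_const_mul, ← hNB, ← hNL]
    rw [Matrix.mulVec_smul, Matrix.mulVec_add, Matrix.mulVec_smul, Matrix.mulVec_smul,
      smul_add, smul_add, smul_smul, smul_smul, smul_smul, smul_smul, smul_smul, smul_smul]
    congr 1
    · congr 1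
      field_simp
      rw [hDval]; ring
    · congr 1
      field_simp
      ring
end
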